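/- Let G be a connected 1-scale graph with distinguished vertices v₁, v₂, external momentum q entering at v₁ and exiting at v₂, and all masses zero. Then the second Symanzik polynomial satisfies φ(q, G) = q² · ψ_{G•}, where G• is the graph obtained by identifying v₁ and v₂. -/

import Mathlib

open MvPolynomial

/-- A (multi)graph with vertex type `V` and labelled edge type `E`; each edge has two
(not necessarily distinct) endpoints. -/
structure FeynGraph where
  V : Type
  E : Type
  src : E → V
  tgt : E → V

namespace FeynGraph

variable (G : FeynGraph)

/-- One step along an edge belonging to the edge set `F`. -/
def Step (F : Set G.E) (u v : G.V) : Prop :=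
  ∃ e ∈ F, (G.src e = u ∧ G.tgt e = v) ∨ (G.src e = v ∧ G.tgt e = u)

/-- `u` and `v` are joined by a walk using only edges in `F`. -/
def Conn (F : Set G.E) (u v : G.V) : Prop :=
  Relation.ReflTransGen (G.Step F) u v

/-- The number of connected components of the spanning subgraph with edge set `F`
(on the full vertex set of `G`). -/
noncomputable def ncomp (F : Set G.E) : ℕ :=
  Nat.card (Quot (G.Conn F))

/-- `G` is connected. -/
def IsConnected : Prop := ∀ u v : G.V, G.Conn Set.univ u v

/-- The loop number (first Betti number) `h = |F| + c(F) - |V|` of the spanning subgraph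
with edge set `F`. -/
noncomputable def loops (F : Set G.E) : ℕ :=
  Nat.card F + G.ncomp F - Nat.card G.V

/-- A maximal spanning forest: an edge set inducing the same connectivity relation as the
whole graph, of cardinality `|V| - c(G)` (hence acyclic, one spanning tree in each
connected component; a spanning tree when `G` is connected). -/
def IsSpanningForest (T : Finset G.E) : Prop :=
  (∀ u v : G.V, G.Conn ↑T u v ↔ G.Conn Set.univ u v) ∧
    T.card + G.ncomp Set.univ = Nat.card G.V

open Classical in
/-- The first Symanzik (Kirchhoff) polynomial `ψ_G = Σ_T Π_{e ∉ T} A_e`, the sum being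
over maximal spanning forests (spanning trees, for `G` connected); for a disjoint union
this is the product of the graph polynomials of the components. -/
noncomputable def psi [Finite G.E] : MvPolynomial G.E ℝ :=
  letI := Fintype.ofFinite G.E
  ∑ T : Finset G.E, if G.IsSpanningForest T then ∏ e ∈ Tᶜ, X e else 0

/-- The subgraph of `G` with edge set `F` (on the full vertex set). -/
def restrict (F : Set G.E) : FeynGraph where
  V := G.V
  E := {e : G.E // e ∈ F}
  src := fun e => G.src e.1
  tgt := fun e => G.tgt e.1

/-- The contraction `G/F`: every edge of `F` is contracted to a point. -/
def contract (F : Set G.E) : FeynGraph where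
  V := Quot (G.Conn F)
  E := {e : G.E // e ∉ F}
  src := fun e => Quot.mk _ (G.src e.1)
  tgt := fun e => Quot.mk _ (G.tgt e.1)

/-- The graph `G•` obtained from `G` by identifying the two vertices `v₁` and `v₂`. -/
def ident (v₁ v₂ : G.V) : FeynGraph where
  V := Quot (fun a b : G.V => a = v₁ ∧ b = v₂)
  E := G.E
  src := fun e => Quot.mk _ (G.src e)
  tgt := fun e => Quot.mk _ (G.tgt e)

/-- The graph `Ḡ` obtained from `G` by adding a new edge joining `v₁` and `v₂`
(the new edge being labelled `none`). -/
def addEdge (v₁ v₂ : G.V) : FeynGraph where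
  V := G.V
  E := Option G.E
  src := fun e => e.elim v₁ G.src
  tgt := fun e => e.elim v₂ G.tgt


instance [Finite G.E] (F : Set G.E) : Finite (G.restrict F).E :=
  inferInstanceAs (Finite {e : G.E // e ∈ F})

instance [Finite G.E] (F : Set G.E) : Finite (G.contract F).E :=
  inferInstanceAs (Finite {e : G.E // e ∉ F})

instance [Finite G.V] (F : Set G.E) : Finite (G.contract F).V :=
  inferInstanceAs (Finite (Quot (G.Conn F)))

instance [Finite G.E] (v₁ v₂ : G.V) : Finite (G.ident v₁ v₂).E :=
  inferInstanceAs (Finite G.E)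

instance [Finite G.V] (v₁ v₂ : G.V) : Finite (G.ident v₁ v₂).V :=
  inferInstanceAs (Finite (Quot _))

instance [Finite G.E] (v₁ v₂ : G.V) : Finite (G.addEdge v₁ v₂).E :=
  letI := Fintype.ofFinite G.E
  inferInstanceAs (Finite (Option G.E))

instance [Finite G.V] (v₁ v₂ : G.V) : Finite (G.addEdge v₁ v₂).V :=
  inferInstanceAs (Finite G.V)

end FeynGraph

namespace FeynGraph

/-- The (Euclidean) pairing of four-momenta. -/
def mdot (p q : Fin 4 → ℝ) : ℝ := ∑ i, p i * q i

variable (G : FeynGraph)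

/-- A spanning two-forest: an acyclic edge set with exactly two connected components
(`|T| = |V| - 2` together with two components forces acyclicity). -/
def IsTwoForest (T : Finset G.E) : Prop :=
  T.card + 2 = Nat.card G.V ∧ G.ncomp ↑T = 2

open Classical in
/-- The second Symanzik polynomial
`φ_G = Σ_{T₁∪T₂} (-Q(T₁)·Q(T₂)) Π_{e ∉ T₁∪T₂} A_e`, the sum being over spanning
two-forests; the momentum factor is written as `(Q(T₁)² + Q(T₂)²)/2`, which by momentum
conservation `Q(T₁) = -Q(T₂)` equals `-Q(T₁)·Q(T₂)` (summing the pairings of the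
momenta of all pairs of vertices lying in the same component). -/
noncomputable def phi [Finite G.E] [Finite G.V] (q : G.V → Fin 4 → ℝ) :
    MvPolynomial G.E ℝ :=
  letI := Fintype.ofFinite G.E
  letI := Fintype.ofFinite G.V
  ∑ T : Finset G.E,
    if G.IsTwoForest T then
      MvPolynomial.C
          ((1/2) * ∑ u : G.V, ∑ v : G.V,
            if G.Conn ↑T u v then mdot (q u) (q v) else 0) *
        ∏ e ∈ Tᶜ, MvPolynomial.X e
    else 0

end FeynGraph

/-!
Momentum conservation makes the factor `-Q(T₁)·Q(T₂)` of a spanning two-forest `T₁ ∪ T₂` equal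
to `q²` when `v₁` and `v₂` lie in different trees and `0` otherwise. The two-forests separating
`v₁` from `v₂` are exactly the spanning trees of `G•`: identifying `v₁` with `v₂` glues the two
trees into one and lowers the vertex count by one, and a spanning tree of `G•` cannot already
join `v₁` to `v₂` in `G`, since `|V| - 2` edges do not connect `G`.
-/

namespace Relation

variable {α : Type*} {r : α → α → Prop} {s t a b : α}

theorem reflTransGen_or_edge_iff :
    ReflTransGen (fun x y => r x y ∨ (x = s ∧ y = t) ∨ (x = t ∧ y = s)) a b ↔
      ReflTransGen r a b ∨ (ReflTransGen r a s ∧ ReflTransGen r t b) ∨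
        (ReflTransGen r a t ∧ ReflTransGen r s b) := by
  constructor
  · intro h
    induction h with
    | refl => exact Or.inl .refl
    | tail _ hstep ih =>
      rcases hstep with hr | ⟨rfl, rfl⟩ | ⟨rfl, rfl⟩
      · rcases ih with h | ⟨h₁, h₂⟩ | ⟨h₁, h₂⟩
        · exact Or.inl (h.tail hr)
        · exact Or.inr (Or.inl ⟨h₁, h₂.tail hr⟩)
        · exact Or.inr (Or.inr ⟨h₁, h₂.tail hr⟩)
      · rcases ih with h | ⟨h, _⟩ | ⟨h, _⟩
        · exact Or.inr (Or.inl ⟨h, .refl⟩)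
        · exact Or.inr (Or.inl ⟨h, .refl⟩)
        · exact Or.inl h
      · rcases ih with h | ⟨h, _⟩ | ⟨h, _⟩
        · exact Or.inr (Or.inr ⟨h, .refl⟩)
        · exact Or.inl h
        · exact Or.inr (Or.inr ⟨h, .refl⟩)
  · have lift := ReflTransGen.mono (p := fun x y => r x y ∨ (x = s ∧ y = t) ∨ (x = t ∧ y = s))
      fun _ _ => Or.inl
    rintro (h | ⟨h₁, h₂⟩ | ⟨h₁, h₂⟩)
    · exact lift _ _ h
    · exact (lift _ _ h₁).trans (.head (Or.inr (Or.inl ⟨rfl, rfl⟩)) (lift _ _ h₂))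
    · exact (lift _ _ h₁).trans (.head (Or.inr (Or.inr ⟨rfl, rfl⟩)) (lift _ _ h₂))

end Relation

namespace FeynGraph

theorem mdot_eq_dotProduct (p q : Fin 4 → ℝ) : mdot p q = p ⬝ᵥ q := rfl

open Classical in
theorem half_sum_ite_mdot_of_one_scale {V : Type*} [Fintype V] {R : V → V → Prop}
    (hrefl : ∀ v, R v v) (hsymm : ∀ {u v}, R u v → R v u) {q : V → Fin 4 → ℝ} {v₁ v₂ : V}
    (hne : v₁ ≠ v₂) {p : Fin 4 → ℝ} (hq₁ : q v₁ = p) (hq₂ : q v₂ = -p)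
    (hq : ∀ v, v ≠ v₁ → v ≠ v₂ → q v = 0) :
    (1 / 2 : ℝ) * ∑ u, ∑ v, (if R u v then mdot (q u) (q v) else 0) =
      if R v₁ v₂ then 0 else mdot p p := by
  have hvanish {u v : V} (h : (u ≠ v₁ ∧ u ≠ v₂) ∨ (v ≠ v₁ ∧ v ≠ v₂)) :
      (if R u v then mdot (q u) (q v) else 0) = 0 := by
    rcases h with ⟨h₁, h₂⟩ | ⟨h₁, h₂⟩ <;> simp [mdot_eq_dotProduct, hq _ h₁ h₂]
  rw [Fintype.sum_eq_add v₁ v₂ hne fun u hu => Finset.sum_eq_zero fun v _ => hvanish (Or.inl hu),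
    Fintype.sum_eq_add v₁ v₂ hne fun v hv => hvanish (Or.inr hv),
    Fintype.sum_eq_add v₁ v₂ hne fun v hv => hvanish (Or.inr hv)]
  simp only [hrefl, hq₁, hq₂, if_true, mdot_eq_dotProduct, neg_dotProduct, dotProduct_neg, neg_neg]
  by_cases h : R v₁ v₂
  · simp only [h, hsymm h, if_true]
    ring
  · simp only [h, mt hsymm h, if_false]
    ring

variable {G : FeynGraph} {F F' : Set G.E} {u v w : G.V}

instance (F : Set G.E) : Std.Symm (G.Step F) where
  symm _ _ := fun ⟨e, he, h⟩ => ⟨e, he, h.symm⟩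

theorem Conn.refl (F : Set G.E) (u : G.V) : G.Conn F u u := Relation.ReflTransGen.refl

theorem Conn.symm (h : G.Conn F u v) : G.Conn F v u :=
  Std.Symm.symm (r := Relation.ReflTransGen (G.Step F)) _ _ h

theorem Conn.trans (h₁ : G.Conn F u v) (h₂ : G.Conn F v w) : G.Conn F u w :=
  Relation.ReflTransGen.trans h₁ h₂

theorem Conn.mono (hF : F ⊆ F') (h : G.Conn F u v) : G.Conn F' u v :=
  Relation.ReflTransGen.mono (fun _ _ ⟨e, he, h⟩ => ⟨e, hF he, h⟩) _ _ h

theorem conn_equivalence (F : Set G.E) : Equivalence (G.Conn F) :=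
  ⟨Conn.refl F, Conn.symm, Conn.trans⟩

theorem quot_mk_conn_eq_iff : Quot.mk (G.Conn F) u = Quot.mk _ v ↔ G.Conn F u v :=
  (conn_equivalence F).quot_mk_eq_iff u v

theorem Conn.cases_of_insert {T : Finset G.E} {e : G.E} [DecidableEq G.E]
    (h : G.Conn ↑(insert e T) u v) :
    G.Conn ↑T u v ∨ (G.Conn ↑T u (G.src e) ∧ G.Conn ↑T (G.tgt e) v) ∨
      (G.Conn ↑T u (G.tgt e) ∧ G.Conn ↑T (G.src e) v) := by
  refine Relation.reflTransGen_or_edge_iff.mp (Relation.ReflTransGen.mono ?_ _ _ h)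
  rintro a b ⟨e', he', hab⟩
  rcases Finset.mem_insert.mp he' with rfl | he'
  · rcases hab with ⟨rfl, rfl⟩ | ⟨rfl, rfl⟩
    exacts [Or.inr (Or.inl ⟨rfl, rfl⟩), Or.inr (Or.inr ⟨rfl, rfl⟩)]
  · exact Or.inl ⟨e', he', hab⟩

theorem ncomp_eq_one_of_forall_conn [Nonempty G.V] (h : ∀ u v, G.Conn F u v) :
    G.ncomp F = 1 := by
  rw [ncomp, Nat.card_eq_one_iff_unique]
  exact ⟨⟨Quot.ind fun u => Quot.ind fun v => Quot.sound (h u v)⟩,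
    ⟨Quot.mk _ (Classical.arbitrary _)⟩⟩

theorem ncomp_eq_two_iff (h : ¬ G.Conn F u v) :
    G.ncomp F = 2 ↔ ∀ w, G.Conn F w u ∨ G.Conn F w v := by
  rw [ncomp, Nat.card_eq_two_iff' (Quot.mk _ u)]
  have hvu : Quot.mk (G.Conn F) v ≠ Quot.mk _ u := fun h' => h (quot_mk_conn_eq_iff.mp h').symm
  constructor
  · rintro ⟨c, -, hc⟩ w
    by_cases hw : G.Conn F w u
    · exact Or.inl hw
    · refine Or.inr (quot_mk_conn_eq_iff.mp ?_)
      rw [hc _ (mt quot_mk_conn_eq_iff.mp hw), hc _ hvu]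
  · refine fun hF => ⟨Quot.mk _ v, hvu, Quot.ind fun w hw => ?_⟩
    exact quot_mk_conn_eq_iff.mpr ((hF w).resolve_left (mt quot_mk_conn_eq_iff.mpr hw))

theorem ncomp_le_ncomp_insert_add_one [Finite G.V] [DecidableEq G.E] (T : Finset G.E)
    (e : G.E) : G.ncomp ↑T ≤ G.ncomp ↑(insert e T) + 1 := by
  classical
  let g : Quot (G.Conn ↑T) → Quot (G.Conn ↑(insert e T)) :=
    Quot.map id fun _ _ => Conn.mono (Finset.coe_subset.mpr (Finset.subset_insert e T))
  let f (c : Quot (G.Conn ↑T)) : Option (Quot (G.Conn ↑(insert e T))) :=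
    if c = Quot.mk _ (G.src e) then none else some (g c)
  have hf : Function.Injective f := by
    rintro ⟨a⟩ ⟨b⟩ hab
    simp only [f] at hab
    split_ifs at hab with ha hb hb
    · rw [ha, hb]
    · rcases (quot_mk_conn_eq_iff.mp (Option.some_injective _ hab)).cases_of_insert with
        h | ⟨h, -⟩ | ⟨-, h⟩
      · exact quot_mk_conn_eq_iff.mpr h
      · exact absurd (quot_mk_conn_eq_iff.mpr h) ha
      · exact absurd (quot_mk_conn_eq_iff.mpr h.symm) hb
  simpa [ncomp] using Nat.card_le_card_of_injective f hf

theorem card_le_card_add_ncomp [Finite G.V] (T : Finset G.E) :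
    Nat.card G.V ≤ T.card + G.ncomp ↑T := by
  classical
  induction T using Finset.induction_on with
  | empty =>
    have hinj : Function.Injective (Quot.mk (G.Conn ↑(∅ : Finset G.E))) := fun a b h => by
      have hstep : ∀ c, ¬ G.Step ↑(∅ : Finset G.E) a c := fun _ ⟨_, he, _⟩ => by simp at he
      exact ((Relation.reflTransGen_iff_eq hstep).mp (quot_mk_conn_eq_iff.mp h)).symm
    simpa [ncomp] using Nat.card_le_card_of_injective _ hinj
  | insert e T he ih =>
    rw [Finset.card_insert_of_notMem he]
    linarith [ncomp_le_ncomp_insert_add_one T e]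

section Ident

variable {v₁ v₂ : G.V}

theorem ident_mk_eq : (Quot.mk _ v₁ : (G.ident v₁ v₂).V) = Quot.mk _ v₂ :=
  Quot.sound ⟨rfl, rfl⟩

theorem ident_mk_eq_mk_iff {a b : G.V} :
    (Quot.mk _ a : (G.ident v₁ v₂).V) = Quot.mk _ b ↔
      a = b ∨ (a = v₁ ∧ b = v₂) ∨ (a = v₂ ∧ b = v₁) := by
  classical
  refine ⟨fun h => ?_, ?_⟩
  · let φ (x : G.V) : G.V := if x = v₂ then v₁ else x
    have hφ : φ a = φ b := congrArg (Quot.lift φ (by rintro _ _ ⟨rfl, rfl⟩; simp [φ])) h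
    simp only [φ] at hφ
    split_ifs at hφ with ha hb hb <;> subst_vars <;> tauto
  · rintro (rfl | ⟨rfl, rfl⟩ | ⟨rfl, rfl⟩)
    exacts [rfl, ident_mk_eq, ident_mk_eq.symm]

theorem card_ident_V_add_one [Finite G.V] (hne : v₁ ≠ v₂) :
    Nat.card (G.ident v₁ v₂).V + 1 = Nat.card G.V := by
  classical
  have hbij : Function.Bijective
      (fun x : {x // x ≠ v₂} => (Quot.mk _ x.1 : (G.ident v₁ v₂).V)) := by
    refine ⟨fun a b h => Subtype.ext ?_, Quot.ind fun a => ?_⟩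
    · rcases ident_mk_eq_mk_iff.mp h with h | ⟨-, h⟩ | ⟨h, -⟩
      exacts [h, absurd h b.2, absurd h a.2]
    · by_cases ha : a = v₂
      · exact ⟨⟨v₁, hne⟩, ha ▸ ident_mk_eq⟩
      · exact ⟨⟨a, ha⟩, rfl⟩
  let := Fintype.ofFinite G.V
  rw [← Nat.card_congr (Equiv.ofBijective (β := (G.ident v₁ v₂).V) _ hbij),
    Nat.card_eq_fintype_card, Nat.card_eq_fintype_card, Fintype.card_subtype_compl,
    Fintype.card_subtype_eq]
  have : 0 < Fintype.card G.V := Fintype.card_pos_iff.mpr ⟨v₂⟩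
  omega

theorem Conn.ident_mk (h : G.Conn F u v) :
    (G.ident v₁ v₂).Conn F (Quot.mk _ u) (Quot.mk _ v) := by
  refine Relation.ReflTransGen.lift _ (fun a b ⟨e, he, hab⟩ => ⟨e, he, ?_⟩) _ _ h
  rcases hab with ⟨rfl, rfl⟩ | ⟨rfl, rfl⟩
  exacts [Or.inl ⟨rfl, rfl⟩, Or.inr ⟨rfl, rfl⟩]

theorem conn_ident_mk_iff :
    (G.ident v₁ v₂).Conn F (Quot.mk _ u) (Quot.mk _ v) ↔ G.Conn F u v ∨
      (G.Conn F u v₁ ∧ G.Conn F v₂ v) ∨ (G.Conn F u v₂ ∧ G.Conn F v₁ v) := by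
  refine ⟨fun h => Relation.reflTransGen_or_edge_iff.mp ?_, ?_⟩
  · let glue (x y : G.V) : Prop := G.Step F x y ∨ (x = v₁ ∧ y = v₂) ∨ (x = v₂ ∧ y = v₁)
    have of_mk_eq {a b : G.V} (hab : (Quot.mk _ a : (G.ident v₁ v₂).V) = Quot.mk _ b) :
        Relation.ReflTransGen glue a b := by
      rcases ident_mk_eq_mk_iff.mp hab with rfl | hab | hab
      exacts [.refl, .single (Or.inr (Or.inl hab)), .single (Or.inr (Or.inr hab))]
    suffices ∀ x y, (G.ident v₁ v₂).Conn F x y → ∀ a b, Quot.mk _ a = x → Quot.mk _ b = y →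
        Relation.ReflTransGen glue a b from this _ _ h u v rfl rfl
    intro x y hxy
    induction hxy with
    | refl => exact fun a b ha hb => of_mk_eq (ha.trans hb.symm)
    | tail _ hstep ih =>
      intro a b ha hb
      obtain ⟨e, he, ⟨hs, ht⟩ | ⟨hs, ht⟩⟩ := hstep
      · exact ((ih a _ ha hs).tail (Or.inl ⟨e, he, Or.inl ⟨rfl, rfl⟩⟩)).trans
          (of_mk_eq (ht.trans hb.symm))
      · exact ((ih a _ ha ht).tail (Or.inl ⟨e, he, Or.inr ⟨rfl, rfl⟩⟩)).trans
          (of_mk_eq (hs.trans hb.symm))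
  · rintro (h | ⟨h₁, h₂⟩ | ⟨h₁, h₂⟩)
    · exact h.ident_mk
    · exact h₁.ident_mk.trans (by rw [ident_mk_eq]; exact h₂.ident_mk)
    · exact h₁.ident_mk.trans (by rw [← ident_mk_eq]; exact h₂.ident_mk)

theorem forall_conn_ident_iff :
    (∀ x y, (G.ident v₁ v₂).Conn F x y) ↔ ∀ u, G.Conn F u v₁ ∨ G.Conn F u v₂ := by
  constructor
  · intro h u
    rcases conn_ident_mk_iff.mp (h (Quot.mk _ u) (Quot.mk _ v₁)) with h | ⟨h, -⟩ | ⟨h, -⟩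
    exacts [Or.inl h, Or.inl h, Or.inr h]
  · rintro h ⟨u⟩ ⟨v⟩
    rw [conn_ident_mk_iff]
    rcases h u with hu | hu <;> rcases h v with hv | hv
    exacts [Or.inl (hu.trans hv.symm), Or.inr (Or.inl ⟨hu, hv.symm⟩),
      Or.inr (Or.inr ⟨hu, hv.symm⟩), Or.inl (hu.trans hv.symm)]

theorem IsConnected.ident (hconn : G.IsConnected) : (G.ident v₁ v₂).IsConnected := by
  rintro ⟨u⟩ ⟨v⟩
  exact (hconn u v).ident_mk

theorem isSpanningForest_ident_iff [Finite G.V] (hconn : G.IsConnected) (hne : v₁ ≠ v₂)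
    (T : Finset G.E) :
    (G.ident v₁ v₂).IsSpanningForest T ↔ G.IsTwoForest T ∧ ¬ G.Conn ↑T v₁ v₂ := by
  have : Nonempty (G.ident v₁ v₂).V := ⟨Quot.mk _ v₁⟩
  have hcard : T.card + (G.ident v₁ v₂).ncomp Set.univ = Nat.card (G.ident v₁ v₂).V ↔
      T.card + 2 = Nat.card G.V := by
    have := card_ident_V_add_one (G := G) hne
    rw [ncomp_eq_one_of_forall_conn hconn.ident]
    omega
  change (∀ x y, (G.ident v₁ v₂).Conn (T : Set G.E) x y ↔ (G.ident v₁ v₂).Conn Set.univ x y) ∧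
      T.card + (G.ident v₁ v₂).ncomp Set.univ = Nat.card (G.ident v₁ v₂).V ↔ _
  simp only [hconn.ident _, iff_true]
  rw [forall_conn_ident_iff, hcard, IsTwoForest]
  by_cases h₁₂ : G.Conn ↑T v₁ v₂
  · refine iff_of_false (fun ⟨hT, hcardT⟩ => ?_) (fun h => h.2 h₁₂)
    have hv₁ (u : G.V) : G.Conn ↑T u v₁ := (hT u).elim id (·.trans h₁₂.symm)
    have : Nonempty G.V := ⟨v₁⟩
    have := ncomp_eq_one_of_forall_conn fun u v => (hv₁ u).trans (hv₁ v).symm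
    have := card_le_card_add_ncomp T
    omega
  · rw [ncomp_eq_two_iff h₁₂]
    tauto

end Ident

end FeynGraph

open FeynGraph MvPolynomial in
open Classical in
/-- For a connected 1-scale graph `G` (external momentum `q` entering at `v₁`, exiting
at `v₂`, all other momenta and all masses zero), the second Symanzik polynomial is
`φ(q,G) = q² · ψ_{G•}`, where `G•` is obtained from `G` by identifying `v₁` and `v₂`. -/
theorem phi_one_scale_eq_q_sq_mul_psi_bullet (G : FeynGraph) [Finite G.V] [Finite G.E]
    (hconn : G.IsConnected) (v₁ v₂ : G.V) (hne : v₁ ≠ v₂) (p : Fin 4 → ℝ) :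
    G.phi (fun v => if v = v₁ then p else if v = v₂ then -p else 0) =
      MvPolynomial.C (mdot p p) *
        (FeynGraph.psi (G.ident v₁ v₂) : MvPolynomial G.E ℝ) := by
  let := Fintype.ofFinite G.E
  let := Fintype.ofFinite G.V
  have hψ : (psi (G.ident v₁ v₂) : MvPolynomial G.E ℝ) = ∑ T : Finset G.E,
      if (G.ident v₁ v₂).IsSpanningForest T then ∏ e ∈ Tᶜ, X e else 0 := rfl
  change _ = (C (mdot p p) : MvPolynomial G.E ℝ) * _
  rw [hψ, phi, Finset.mul_sum]
  refine Finset.sum_congr rfl fun T _ => ?_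
  rw [half_sum_ite_mdot_of_one_scale (Conn.refl _) Conn.symm hne (p := p) (by simp)
    (by simp [hne.symm]) (fun v h₁ h₂ => by simp [h₁, h₂])]
  by_cases h₁₂ : G.Conn ↑T v₁ v₂ <;> simp [h₁₂, isSpanningForest_ident_iff hconn hne]
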